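/- arXiv:math/0612759 — 4 statements merged into one kernel-verified Lean document; each statement's English description precedes it below -/
import Mathlib

section
/- (Proposition 2: odd bodies on a simple Figure-Eight never collide.) Let T > 0, let k be a positive integer, set N = 2k + 1, and let q : ℝ → ℝ² be a continuous T-periodic map satisfying the Simple Figure-Eight assumption: for all t₁, t₂ ∈ [0, T) with t₁ ≠ t₂, if q(t₁) = q(t₂) then t₁ ∈ {0, T/2} and t₂ ∈ {0, T/2}. Define q_i(t) = q(t + (N - i)T/N) for i = 1, …, N. Then for all t ∈ ℝ and all indices 1 ≤ i < j ≤ N, q_i(t) ≠ q_j(t). -/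
/-!
Reducing two collision times modulo `T` lands them in `[0, T)`, where the Simple Figure-Eight
assumption forces them to be equal or to be `0` and `T/2`; so colliding times differ by an
integer multiple of `T/2`. Bodies `i < j` are separated in time by `(j - i) T / N` with
`0 < j - i < N`, and for odd `N` this is never a multiple of `T/2`, since `N ∣ 2 (j - i)`
would force `N ∣ j - i`.
-/

open Set

lemma Function.Periodic.sub_eq_int_mul_half_of_eq {α : Type*} {q : ℝ → α} {T : ℝ} (hT : 0 < T)
    (hper : Function.Periodic q T)
    (hsimple : ∀ t₁ ∈ Ico (0 : ℝ) T, ∀ t₂ ∈ Ico (0 : ℝ) T,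
      t₁ ≠ t₂ → q t₁ = q t₂ → t₁ ∈ ({0, T / 2} : Set ℝ) ∧ t₂ ∈ ({0, T / 2} : Set ℝ))
    {s₁ s₂ : ℝ} (heq : q s₁ = q s₂) :
    ∃ n : ℤ, s₁ - s₂ = n * (T / 2) := by
  have hdecomp (s : ℝ) : s = toIcoMod hT 0 s + toIcoDiv hT 0 s * T := by
    rw [← self_sub_toIcoDiv_zsmul, zsmul_eq_mul]; ring
  have hmem (s : ℝ) : toIcoMod hT 0 s ∈ Ico (0 : ℝ) T := by
    simpa using toIcoMod_mem_Ico hT 0 s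
  have hq_mod (s : ℝ) : q (toIcoMod hT 0 s) = q s := by
    rw [← self_sub_toIcoDiv_zsmul, zsmul_eq_mul, hper.sub_int_mul_eq]
  have hq : q (toIcoMod hT 0 s₁) = q (toIcoMod hT 0 s₂) := by rw [hq_mod, hq_mod, heq]
  obtain ⟨m, hm⟩ : ∃ m : ℤ, toIcoMod hT 0 s₁ - toIcoMod hT 0 s₂ = m * (T / 2) := by
    by_cases hne : toIcoMod hT 0 s₁ = toIcoMod hT 0 s₂
    · exact ⟨0, by simp [hne]⟩
    obtain ⟨h₁ | h₁, h₂ | h₂⟩ := hsimple _ (hmem s₁) _ (hmem s₂) hne hq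
    · exact absurd (h₁.trans h₂.symm) hne
    · exact ⟨-1, by rw [h₁, h₂]; push_cast; ring⟩
    · exact ⟨1, by rw [h₁, h₂]; push_cast; ring⟩
    · exact absurd (h₁.trans h₂.symm) hne
  refine ⟨m + 2 * (toIcoDiv hT 0 s₁ - toIcoDiv hT 0 s₂), ?_⟩
  push_cast
  linear_combination hm + hdecomp s₁ - hdecomp s₂

lemma int_mul_div_ne_int_mul_half {N : ℕ} (hN : Odd N) {m : ℤ} (hm₀ : 0 < m) (hmN : m < N)
    {T : ℝ} (hT : T ≠ 0) (n : ℤ) : m * T / N ≠ n * (T / 2) := by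
  intro h
  have hN₀ : (N : ℝ) ≠ 0 := by exact_mod_cast hN.pos.ne'
  have hint : 2 * m = N * n := by
    have hreal : (2 * m : ℝ) = N * n := by
      field_simp at h
      linear_combination h
    exact_mod_cast hreal
  have hdvd : (N : ℤ) ∣ 2 * m := ⟨n, hint⟩
  have hcop : IsCoprime (N : ℤ) 2 := Int.isCoprime_two_right.mpr (by exact_mod_cast hN)
  exact absurd (Int.le_of_dvd hm₀ (hcop.dvd_of_dvd_mul_left hdvd)) (not_le.mpr hmN)

theorem odd_bodies_no_collision_general (T : ℝ) (hT : 0 < T) (k : ℕ)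
    (N : ℕ) (hN : N = 2 * k + 1) (q : ℝ → ℝ × ℝ)
    (hper : ∀ t : ℝ, q (t + T) = q t)
    (hsimple : ∀ t₁ ∈ Set.Ico (0 : ℝ) T, ∀ t₂ ∈ Set.Ico (0 : ℝ) T,
      t₁ ≠ t₂ → q t₁ = q t₂ →
        t₁ ∈ ({0, T / 2} : Set ℝ) ∧ t₂ ∈ ({0, T / 2} : Set ℝ)) :
    ∀ t : ℝ, ∀ i j : ℕ, 1 ≤ i → i < j → j ≤ N →
      q (t + ((N : ℝ) - (i : ℝ)) * T / (N : ℝ))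
        ≠ q (t + ((N : ℝ) - (j : ℝ)) * T / (N : ℝ)) := by
  intro t i j hi hij hjN heq
  obtain ⟨n, hn⟩ := Function.Periodic.sub_eq_int_mul_half_of_eq hT hper hsimple heq
  have hNodd : Odd N := ⟨k, hN⟩
  have hN₀ : (N : ℝ) ≠ 0 := by exact_mod_cast hNodd.pos.ne'
  refine int_mul_div_ne_int_mul_half hNodd (m := j - i) (by omega) (by omega) hT.ne' n ?_
  rw [← hn]
  push_cast
  field_simp
  ring

/-- Proposition 2: an odd number `N = 2k + 1` of bodies on a simple Figure-Eight
(whose only self-intersection occurs at the times `0` and `T/2`) never collide. -/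
theorem odd_bodies_no_collision (T : ℝ) (hT : 0 < T) (k : ℕ) (hk : 0 < k)
    (N : ℕ) (hN : N = 2 * k + 1) (q : ℝ → ℝ × ℝ)
    (hq : Continuous q)
    (hper : ∀ t : ℝ, q (t + T) = q t)
    (hsimple : ∀ t₁ ∈ Set.Ico (0 : ℝ) T, ∀ t₂ ∈ Set.Ico (0 : ℝ) T,
      t₁ ≠ t₂ → q t₁ = q t₂ →
        t₁ ∈ ({0, T / 2} : Set ℝ) ∧ t₂ ∈ ({0, T / 2} : Set ℝ)) :
    ∀ t : ℝ, ∀ i j : ℕ, 1 ≤ i → i < j → j ≤ N →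
      q (t + ((N : ℝ) - (i : ℝ)) * T / (N : ℝ))
        ≠ q (t + ((N : ℝ) - (j : ℝ)) * T / (N : ℝ)) :=
  odd_bodies_no_collision_general T hT k N hN q hper hsimple
end

section
/- (Theorem 1: odd bodies on Figure-Eight are collision-free on a dense set of times.) Let T > 0, let N ≥ 3 be an odd integer, and let q : ℝ → ℝ² be a continuous T-periodic map satisfying the generalized simple assumption: for all t₁, t₂ ∈ [0, T) with t₁ ≠ t₂, if q(t₁) = q(t₂) then t₁ ∈ I and t₂ ∈ I, where I = {0} ∪ { (2r₁ - 1)T/(2r₂) : r₁, r₂ positive integers with (2r₁ - 1)/(2r₂) ≤ 1 }. Define q_i(t) = q(t + (N - i)T/N) for i = 1, …, N. Then the set { t ∈ [0, T] : q_i(t) ≠ q_j(t) for all 1 ≤ i < j ≤ N } is dense in [0, T]. -/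
/-!
Two bodies `i < j` collide at time `t` exactly when `q` takes the same value at the times
`t + (N - i)T/N` and `t + (N - j)T/N`, which differ by `(j - i)T/N`, not a multiple of `T`.
Reduced modulo `T` these are two distinct times in `[0, T)` at which `q` self-intersects, so both
lie in the countable set `I`. Hence each pair of bodies collides only at times in the countable set
`I + Tℤ - (N - i)T/N`, and the complement of a countable set is dense in any nondegenerate interval.
-/

open Set AddCommGroup

lemma not_modEq_of_lt_of_lt_add {T c d : ℝ} (hT : 0 < T) (hcd : c < d) (hdc : d < c + T) :
    ¬ c ≡ d [PMOD T] := by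
  rw [modEq_iff_toIcoMod_eq_left hT, (toIcoMod_eq_self hT).2 ⟨hcd.le, hdc⟩]
  exact hcd.ne'

lemma Icc_subset_closure_Icc_diff {a b : ℝ} (hab : a < b) {S : Set ℝ} (hS : S.Countable) :
    Icc a b ⊆ closure (Icc a b \ S) :=
  calc Icc a b = closure (Ioo a b) := (closure_Ioo hab.ne).symm
    _ ⊆ closure (Ioo a b ∩ Sᶜ) :=
      closure_minimal ((hS.dense_compl ℝ).open_subset_closure_inter isOpen_Ioo) isClosed_closure
    _ ⊆ closure (Icc a b \ S) := closure_mono (inter_subset_inter_left _ Ioo_subset_Icc_self)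

namespace Function.Periodic

variable {α : Type*} {q : ℝ → α} {T : ℝ} {I : Set ℝ}

lemma toIcoMod_mem_of_eq_of_not_modEq (hper : Periodic q T) (hT : 0 < T)
    (hsimple : ∀ t₁ ∈ Ico 0 T, ∀ t₂ ∈ Ico 0 T, t₁ ≠ t₂ → q t₁ = q t₂ → t₁ ∈ I)
    {x y : ℝ} (hxy : q x = q y) (hmod : ¬ x ≡ y [PMOD T]) : toIcoMod hT 0 x ∈ I := by
  have hq (z : ℝ) : q (toIcoMod hT 0 z) = q z := by
    rw [← self_sub_toIcoDiv_zsmul, hper.sub_zsmul_eq]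
  refine hsimple _ (toIcoMod_mem_Ico' hT x) _ (toIcoMod_mem_Ico' hT y) (fun h => hmod ?_) ?_
  · exact modEq_iff_zsmul'.2 ((toIcoMod_eq_toIcoMod hT).1 h)
  · rw [hq, hq, hxy]

lemma countable_setOf_eq_add (hper : Periodic q T) (hT : 0 < T)
    (hsimple : ∀ t₁ ∈ Ico 0 T, ∀ t₂ ∈ Ico 0 T, t₁ ≠ t₂ → q t₁ = q t₂ → t₁ ∈ I)
    (hI : I.Countable) {c d : ℝ} (hcd : ¬ c ≡ d [PMOD T]) :
    {t | q (t + c) = q (t + d)}.Countable := by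
  refine (countable_iUnion fun k : ℤ => hI.image fun x => x + k • T - c).mono fun t ht => ?_
  have hmod : ¬ t + c ≡ t + d [PMOD T] := fun h => hcd (h.add_left_cancel' t)
  refine mem_iUnion.2 ⟨toIcoDiv hT 0 (t + c),
    toIcoMod hT 0 (t + c), hper.toIcoMod_mem_of_eq_of_not_modEq hT hsimple ht hmod, ?_⟩
  simp only [toIcoMod_add_toIcoDiv_zsmul, add_sub_cancel_right]

end Function.Periodic

lemma not_modEq_equivariant_shift {T : ℝ} (hT : 0 < T) {N i j : ℕ} (hi : 1 ≤ i) (hij : i < j)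
    (hjN : j ≤ N) :
    ¬ ((N : ℝ) - i) * T / N ≡ ((N : ℝ) - j) * T / N [PMOD T] := by
  have hN : (0 : ℝ) < N := by exact_mod_cast (show 0 < N by omega)
  have hij' : (i : ℝ) < j := by exact_mod_cast hij
  have hi' : (1 : ℝ) ≤ i := by exact_mod_cast hi
  have hjN' : (j : ℝ) ≤ N := by exact_mod_cast hjN
  refine fun h => not_modEq_of_lt_of_lt_add hT ?_ ?_ h.symm
  · exact div_lt_div_of_pos_right (by nlinarith) hN
  · rw [div_add' _ _ _ hN.ne', div_lt_div_iff_of_pos_right hN]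
    nlinarith

theorem odd_bodies_dense_no_collision_general (T : ℝ) (hT : 0 < T)
    (N : ℕ) (q : ℝ → ℝ × ℝ)
    (hper : ∀ t : ℝ, q (t + T) = q t)
    (I : Set ℝ)
    (hI : I = {0} ∪ {x : ℝ | ∃ r₁ r₂ : ℕ, 0 < r₁ ∧ 0 < r₂ ∧
      (2 * (r₁ : ℝ) - 1) / (2 * (r₂ : ℝ)) ≤ 1 ∧
      x = (2 * (r₁ : ℝ) - 1) * T / (2 * (r₂ : ℝ))})
    (hsimple : ∀ t₁ ∈ Set.Ico (0 : ℝ) T, ∀ t₂ ∈ Set.Ico (0 : ℝ) T,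
      t₁ ≠ t₂ → q t₁ = q t₂ → t₁ ∈ I ∧ t₂ ∈ I) :
    Set.Icc (0 : ℝ) T ⊆
      closure {t : ℝ | t ∈ Set.Icc (0 : ℝ) T ∧
        ∀ i j : ℕ, 1 ≤ i → i < j → j ≤ N →
          q (t + ((N : ℝ) - (i : ℝ)) * T / (N : ℝ))
            ≠ q (t + ((N : ℝ) - (j : ℝ)) * T / (N : ℝ))} := by
  have hIc : I.Countable := by
    rw [hI]
    refine (countable_singleton 0).union
      ((countable_range fun r : ℕ × ℕ => (2 * (r.1 : ℝ) - 1) * T / (2 * (r.2 : ℝ))).mono ?_)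
    rintro x ⟨r₁, r₂, -, -, -, hx⟩
    exact ⟨(r₁, r₂), hx.symm⟩
  let collisions : Set ℝ := ⋃ (i : ℕ) (j : ℕ) (_ : 1 ≤ i ∧ i < j ∧ j ≤ N),
    {t | q (t + ((N : ℝ) - i) * T / N) = q (t + ((N : ℝ) - j) * T / N)}
  have hcount : collisions.Countable :=
    countable_iUnion fun i => countable_iUnion fun j => countable_iUnion fun hij =>
      Function.Periodic.countable_setOf_eq_add hper hT
        (fun t₁ h₁ t₂ h₂ hne heq => (hsimple t₁ h₁ t₂ h₂ hne heq).1) hIc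
        (not_modEq_equivariant_shift hT hij.1 hij.2.1 hij.2.2)
  refine (Icc_subset_closure_Icc_diff hT hcount).trans (closure_mono ?_)
  rintro t ⟨ht, htc⟩
  exact ⟨ht, fun i j hi hij hjN h => htc (mem_iUnion₂.2 ⟨i, j, mem_iUnion.2 ⟨⟨hi, hij, hjN⟩, h⟩⟩)⟩

/-- Theorem 1: for an odd number `N ≥ 3` of bodies on a Figure-Eight whose
self-intersections all happen at times in the set
`I = {0} ∪ {(2r₁ - 1)T/(2r₂) : r₁, r₂ ∈ ℤ⁺, (2r₁-1)/(2r₂) ≤ 1}`,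
the set of times in `[0, T]` at which no two bodies collide is dense in `[0, T]`. -/
theorem odd_bodies_dense_no_collision (T : ℝ) (hT : 0 < T)
    (N : ℕ) (hN : 3 ≤ N) (hodd : Odd N) (q : ℝ → ℝ × ℝ)
    (hq : Continuous q)
    (hper : ∀ t : ℝ, q (t + T) = q t)
    (I : Set ℝ)
    (hI : I = {0} ∪ {x : ℝ | ∃ r₁ r₂ : ℕ, 0 < r₁ ∧ 0 < r₂ ∧
      (2 * (r₁ : ℝ) - 1) / (2 * (r₂ : ℝ)) ≤ 1 ∧
      x = (2 * (r₁ : ℝ) - 1) * T / (2 * (r₂ : ℝ))})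
    (hsimple : ∀ t₁ ∈ Set.Ico (0 : ℝ) T, ∀ t₂ ∈ Set.Ico (0 : ℝ) T,
      t₁ ≠ t₂ → q t₁ = q t₂ → t₁ ∈ I ∧ t₂ ∈ I) :
    Set.Icc (0 : ℝ) T ⊆
      closure {t : ℝ | t ∈ Set.Icc (0 : ℝ) T ∧
        ∀ i j : ℕ, 1 ≤ i → i < j → j ≤ N →
          q (t + ((N : ℝ) - (i : ℝ)) * T / (N : ℝ))
            ≠ q (t + ((N : ℝ) - (j : ℝ)) * T / (N : ℝ))} :=
  odd_bodies_dense_no_collision_general T hT N q hper I hI hsimple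
end

section
/- Let T > 0 and let q = (q^(1), q^(2), q^(3)) : ℝ → ℝ³ be a continuously differentiable T-periodic map satisfying, for all t ∈ ℝ, q^(1)(t) = -q^(1)(t + T/2), q^(2)(t) = -q^(2)(t + T/4), and q^(3)(t) = -q^(3)(t + T/2). Then for every t ∈ ℝ, the Euclidean norm of q(t) satisfies |q(t)| ≤ (√(3T)/4) · (∫₀ᵀ |q̇(s)|² ds)^{1/2}. -/
/-!
If `f` is `C¹` with `f (t + a) = -f t`, the fundamental theorem of calculus on `[t, t + a]` gives
`2 ‖f t‖ ≤ ∫_t^{t+a} ‖f'‖`, and Cauchy–Schwarz turns this into `‖f t‖² ≤ (a/4) ∫_0^a ‖f'‖²`,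
because `‖f'‖²` is `a`-periodic. Applying this to the three coordinates of `q`, with antiperiods
`T/2`, `T/4` and `T/2`, and summing gives the bound.
-/

open intervalIntegral Function

theorem intervalIntegral.sq_integral_le_mul_integral_sq {g : ℝ → ℝ} (hg : Continuous g) {a b : ℝ}
    (hab : a ≤ b) :
    (∫ s in a..b, g s) ^ 2 ≤ (b - a) * ∫ s in a..b, g s ^ 2 := by
  have hquad : ∀ c : ℝ, 0 ≤ (b - a) * (c * c) + (-2 * ∫ s in a..b, g s) * c
      + ∫ s in a..b, g s ^ 2 := by
    intro c
    have hexpand : ∫ s in a..b, (g s - c) ^ 2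
        = (∫ s in a..b, g s ^ 2) - 2 * c * (∫ s in a..b, g s) + (b - a) * c ^ 2 := by
      simp_rw [sub_sq]
      rw [integral_add, integral_sub, integral_const, integral_mul_const, integral_const_mul]
      · simp only [smul_eq_mul]; ring
      all_goals exact Continuous.intervalIntegrable (by fun_prop) _ _
    have hnonneg : 0 ≤ ∫ s in a..b, (g s - c) ^ 2 := integral_nonneg hab fun s _ => sq_nonneg _
    linarith
  have hdiscrim := discrim_le_zero hquad
  rw [discrim] at hdiscrim
  linarith

theorem Function.Antiperiodic.deriv {𝕜 E : Type*} [NontriviallyNormedField 𝕜]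
    [NormedAddCommGroup E] [NormedSpace 𝕜 E] {f : 𝕜 → E} {c : 𝕜} (hf : Antiperiodic f c) :
    Antiperiodic (deriv f) c := fun x => by
  rw [← deriv_comp_add_const, hf.funext, deriv.neg]

theorem norm_sq_le_of_antiperiodic {E : Type*} [NormedAddCommGroup E] [NormedSpace ℝ E]
    [CompleteSpace E] {f : ℝ → E} (hf : ContDiff ℝ 1 f) {a : ℝ} (ha : 0 < a)
    (hanti : Antiperiodic f a) (t : ℝ) :
    ‖f t‖ ^ 2 ≤ a / 4 * ∫ s in 0..a, ‖deriv f s‖ ^ 2 := by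
  have hdf : Continuous (deriv f) := hf.continuous_deriv le_rfl
  have hper : Periodic (fun s => ‖deriv f s‖ ^ 2) a := fun s => by
    simp only [hanti.deriv s, norm_neg]
  have hftc : ∫ s in t..t + a, deriv f s = -(2 : ℝ) • f t := by
    rw [integral_deriv_eq_sub (fun x _ => hf.differentiable one_ne_zero x)
      (hdf.intervalIntegrable _ _), hanti t]
    module
  have key : (2 * ‖f t‖) ^ 2 ≤ a * ∫ s in 0..a, ‖deriv f s‖ ^ 2 := calc
    (2 * ‖f t‖) ^ 2 = ‖∫ s in t..t + a, deriv f s‖ ^ 2 := by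
      rw [hftc, norm_smul]; norm_num
    _ ≤ (∫ s in t..t + a, ‖deriv f s‖) ^ 2 :=
      pow_le_pow_left₀ (norm_nonneg _) (norm_integral_le_integral_norm (by linarith)) 2
    _ ≤ (t + a - t) * ∫ s in t..t + a, ‖deriv f s‖ ^ 2 :=
      sq_integral_le_mul_integral_sq hdf.norm (by linarith)
    _ = a * ∫ s in 0..a, ‖deriv f s‖ ^ 2 := by
      rw [hper.intervalIntegral_add_eq t 0, zero_add, add_sub_cancel_left]
  linarith

theorem EuclideanSpace.sq_apply_le_of_antiperiodic {ι : Type*} [Fintype ι]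
    {q : ℝ → EuclideanSpace ℝ ι} (hq : ContDiff ℝ 1 q) (i : ι) {a T : ℝ} (ha : 0 < a)
    (haT : a ≤ T) (hanti : Antiperiodic (fun s => q s i) a) (t : ℝ) :
    q t i ^ 2 ≤ a / 4 * ∫ s in 0..T, deriv q s i ^ 2 := by
  let π : EuclideanSpace ℝ ι →L[ℝ] ℝ := EuclideanSpace.proj i
  have hderiv : ∀ s, deriv (fun u => q u i) s = deriv q s i := fun s =>
    (π.hasFDerivAt.comp_hasDerivAt s (hq.differentiable one_ne_zero s).hasDerivAt).deriv
  have hbound := norm_sq_le_of_antiperiodic (f := fun u => q u i) (π.contDiff.comp hq) ha hanti t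
  simp only [Real.norm_eq_abs, sq_abs, hderiv] at hbound
  refine hbound.trans (mul_le_mul_of_nonneg_left ?_ (by positivity))
  exact integral_mono_interval le_rfl ha.le haT (Filter.Eventually.of_forall fun s => sq_nonneg _)
    (Continuous.intervalIntegrable (by fun_prop) _ _)

theorem norm_bound_symmetry1_general (T : ℝ) (hT : 0 < T)
    (q : ℝ → EuclideanSpace ℝ (Fin 3))
    (hq : ContDiff ℝ 1 q)
    (h1 : ∀ t : ℝ, q t 0 = -q (t + T / 2) 0)
    (h2 : ∀ t : ℝ, q t 1 = -q (t + T / 4) 1)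
    (h3 : ∀ t : ℝ, q t 2 = -q (t + T / 2) 2) :
    ∀ t : ℝ, ‖q t‖ ≤ Real.sqrt (3 * T) / 4 *
      Real.sqrt (∫ s in (0 : ℝ)..T, ‖deriv q s‖ ^ 2) := by
  intro t
  have hI : ∫ s in (0 : ℝ)..T, ‖deriv q s‖ ^ 2 = ∑ i, ∫ s in (0 : ℝ)..T, deriv q s i ^ 2 := by
    simp_rw [EuclideanSpace.real_norm_sq_eq]
    exact integral_finsetSum fun i _ => Continuous.intervalIntegrable (by fun_prop) _ _
  have hTI_nonneg : ∀ i, 0 ≤ T * ∫ s in (0 : ℝ)..T, deriv q s i ^ 2 := fun i =>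
    mul_nonneg hT.le (integral_nonneg hT.le fun s _ => sq_nonneg _)
  have hq0 := EuclideanSpace.sq_apply_le_of_antiperiodic hq 0 (a := T / 2) (T := T)
    (by linarith) (by linarith) (fun t => (neg_eq_iff_eq_neg.mpr (h1 t)).symm) t
  have hq1 := EuclideanSpace.sq_apply_le_of_antiperiodic hq 1 (a := T / 4) (T := T)
    (by linarith) (by linarith) (fun t => (neg_eq_iff_eq_neg.mpr (h2 t)).symm) t
  have hq2 := EuclideanSpace.sq_apply_le_of_antiperiodic hq 2 (a := T / 2) (T := T)
    (by linarith) (by linarith) (fun t => (neg_eq_iff_eq_neg.mpr (h3 t)).symm) t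
  have hsq : ‖q t‖ ^ 2 ≤ 3 * T / 16 * ∫ s in (0 : ℝ)..T, ‖deriv q s‖ ^ 2 := by
    rw [EuclideanSpace.real_norm_sq_eq, hI, Fin.sum_univ_three, Fin.sum_univ_three]
    linarith [hTI_nonneg 0, hTI_nonneg 1, hTI_nonneg 2]
  calc ‖q t‖ ≤ Real.sqrt (3 * T / 16 * ∫ s in (0 : ℝ)..T, ‖deriv q s‖ ^ 2) :=
        Real.le_sqrt_of_sq_le hsq
    _ = Real.sqrt (3 * T) / 4 * Real.sqrt (∫ s in (0 : ℝ)..T, ‖deriv q s‖ ^ 2) := by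
        rw [Real.sqrt_mul (by positivity), Real.sqrt_div' _ (by norm_num : (0 : ℝ) ≤ 16),
          show (16 : ℝ) = 4 ^ 2 by norm_num, Real.sqrt_sq (by norm_num)]

/-- Estimate of `|q(t)|` for a `T`-periodic `C¹` loop in `ℝ³` whose first and third
components are `T/2`-antiperiodic and whose second component is `T/4`-antiperiodic:
`|q(t)| ≤ (√(3T)/4) (∫₀ᵀ |q̇|²)^{1/2}`. -/
theorem norm_bound_symmetry1 (T : ℝ) (hT : 0 < T)
    (q : ℝ → EuclideanSpace ℝ (Fin 3))
    (hq : ContDiff ℝ 1 q)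
    (hper : ∀ t : ℝ, q (t + T) = q t)
    (h1 : ∀ t : ℝ, q t 0 = -q (t + T / 2) 0)
    (h2 : ∀ t : ℝ, q t 1 = -q (t + T / 4) 1)
    (h3 : ∀ t : ℝ, q t 2 = -q (t + T / 2) 2) :
    ∀ t : ℝ, ‖q t‖ ≤ Real.sqrt (3 * T) / 4 *
      Real.sqrt (∫ s in (0 : ℝ)..T, ‖deriv q s‖ ^ 2) :=
  norm_bound_symmetry1_general T hT q hq h1 h2 h3
end

section
/- (Strong Force condition implies infinite action along collision paths.) Let d ≥ 1, δ > 0, let U : ℝ^d \ {0} → ℝ be continuous with U(ξ) ≤ 0 for all ξ ≠ 0, and suppose there exists a continuously differentiable function V : ℝ^d \ {0} → ℝ such that V(ξ) → +∞ as ξ → 0 and −U(ξ) ≥ |∇V(ξ)|² whenever 0 < |ξ| ≤ δ. Let a < b and let x : [a, b] → ℝ^d be continuous on [a, b], continuously differentiable on [a, b), with x(t) ≠ 0 for all t ∈ [a, b) and x(b) = 0. Then the action integral diverges: for every M > 0 there exists b' ∈ (a, b) such that ∫_a^{b'} ( (1/2)|ẋ(t)|² − U(x(t)) ) dt ≥ M.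 -/
/-!
Along a path `x` the strong-force condition and `½|v|² + |g|² ≥ √2 |g| |v| ≥ √2 ⟪g, v⟫` give
`½|ẋ|² − U(x) ≥ √2 (V ∘ x)'` as soon as `x` stays in the ball of radius `δ`. Integrating from a
time `t₀` after which the path is in that ball, the action over `[t₀, b']` is at least
`√2 (V(x b') − V(x t₀))`, which tends to `+∞` as `b' → b⁻` because `x(b') → 0`, while the
action over `[a, t₀]` is a fixed number.
-/

open Filter Topology Set
open scoped RealInnerProductSpace

theorem Filter.Eventually.forall_Ico_of_nhdsLT {α : Type*} [TopologicalSpace α] [LinearOrder α]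
    [OrderTopology α] [NoMinOrder α] {b : α} {p : α → Prop} (h : ∀ᶠ t in 𝓝[<] b, p t) :
    ∀ᶠ t₀ in 𝓝[<] b, ∀ t ∈ Ico t₀ b, p t := by
  obtain ⟨l, hl, hsub⟩ := mem_nhdsLT_iff_exists_Ioo_subset.1 h
  filter_upwards [Ioo_mem_nhdsLT hl] with t₀ ht₀ t ht using hsub ⟨ht₀.1.trans_le ht.1, ht.2⟩

theorem tendsto_nhdsLT_nhdsNE_of_continuousOn_Icc {E : Type*} [TopologicalSpace E]
    {x : ℝ → E} {a b : ℝ} {p : E} (hab : a < b) (hx : ContinuousOn x (Icc a b))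
    (hxp : ∀ t ∈ Ico a b, x t ≠ p) (hxb : x b = p) :
    Tendsto x (𝓝[<] b) (𝓝[≠] p) := by
  have hcont : ContinuousWithinAt x (Iio b) b :=
    (hx b (right_mem_Icc.2 hab.le)).mono_of_mem_nhdsWithin (Icc_mem_nhdsLT hab)
  refine tendsto_nhdsWithin_iff.2 ⟨hxb ▸ hcont.tendsto, ?_⟩
  filter_upwards [Ico_mem_nhdsLT hab] with t ht using hxp t ht

section StrongForce

variable {E : Type*} [NormedAddCommGroup E] [InnerProductSpace ℝ E]

theorem sqrt_two_mul_inner_le_half_norm_sq_add_norm_sq (g v : E) :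
    √2 * ⟪g, v⟫ ≤ 1 / 2 * ‖v‖ ^ 2 + ‖g‖ ^ 2 := by
  have hinner : ⟪g, v⟫ ≤ ‖g‖ * ‖v‖ := real_inner_le_norm g v
  have hsqrt : √2 ^ 2 = 2 := Real.sq_sqrt zero_le_two
  nlinarith [sq_nonneg (‖v‖ - √2 * ‖g‖), Real.sqrt_nonneg 2]

variable [CompleteSpace E]

theorem HasGradientAt.comp_hasDerivAt {V : E → ℝ} {g : E} {x : ℝ → E} {v : E} {t : ℝ}
    (hV : HasGradientAt V g (x t)) (hx : HasDerivAt x v t) :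
    HasDerivAt (fun s ↦ V (x s)) ⟪g, v⟫ t := by
  have h := hV.hasFDerivAt.comp_hasDerivAt t hx
  rwa [InnerProductSpace.toDual_apply_apply] at h

theorem sqrt_two_mul_sub_le_integral_of_strongForce {U V : E → ℝ} {x x' : ℝ → E} {s t : ℝ}
    (hst : s ≤ t) (hVx : ContinuousOn (fun u ↦ V (x u)) (Icc s t))
    (hx : ∀ u ∈ Ioo s t, HasDerivAt x (x' u) u)
    (hV : ∀ u ∈ Ioo s t, DifferentiableAt ℝ V (x u))
    (hSF : ∀ u ∈ Ioo s t, ‖gradient V (x u)‖ ^ 2 ≤ -U (x u))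
    (hL : MeasureTheory.IntegrableOn (fun u ↦ 1 / 2 * ‖x' u‖ ^ 2 - U (x u)) (Icc s t)) :
    √2 * (V (x t) - V (x s)) ≤ ∫ u in s..t, (1 / 2 * ‖x' u‖ ^ 2 - U (x u)) := by
  rw [mul_sub]
  refine intervalIntegral.sub_le_integral_of_hasDeriv_right_of_le (g := fun u ↦ √2 * V (x u))
    (g' := fun u ↦ √2 * ⟪gradient V (x u), x' u⟫) hst (continuousOn_const.mul hVx)
    (fun u hu ↦ ?_) hL (fun u hu ↦ ?_)
  · exact (((hV u hu).hasGradientAt.comp_hasDerivAt (hx u hu)).const_mul √2).hasDerivWithinAt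
  · calc √2 * ⟪gradient V (x u), x' u⟫
        ≤ 1 / 2 * ‖x' u‖ ^ 2 + ‖gradient V (x u)‖ ^ 2 :=
          sqrt_two_mul_inner_le_half_norm_sq_add_norm_sq _ _
      _ ≤ 1 / 2 * ‖x' u‖ ^ 2 - U (x u) := by linarith [hSF u hu]

theorem integral_add_sqrt_two_mul_sub_le_integral_of_strongForce {U V : E → ℝ} {Ω : Set E}
    (hΩ : IsOpen Ω) (hU : ContinuousOn U Ω) (hV : ContDiffOn ℝ 1 V Ω) {x x' : ℝ → E} {a b t₀ : ℝ}
    (hx : ContinuousOn x (Icc a b)) (hx' : ContinuousOn x' (Icc a b))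
    (hderiv : ∀ t ∈ Ioo a b, HasDerivAt x (x' t) t) (hxΩ : MapsTo x (Icc a b) Ω)
    (ht₀ : t₀ ∈ Icc a b) (hSF : ∀ t ∈ Ioo t₀ b, ‖gradient V (x t)‖ ^ 2 ≤ -U (x t)) :
    (∫ t in a..t₀, (1 / 2 * ‖x' t‖ ^ 2 - U (x t))) + √2 * (V (x b) - V (x t₀)) ≤
      ∫ t in a..b, (1 / 2 * ‖x' t‖ ^ 2 - U (x t)) := by
  have hL : ContinuousOn (fun t ↦ 1 / 2 * ‖x' t‖ ^ 2 - U (x t)) (Icc a b) :=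
    (continuousOn_const.mul (hx'.norm.pow 2)).sub (hU.comp hx hxΩ)
  have hIcc : Icc t₀ b ⊆ Icc a b := Icc_subset_Icc_left ht₀.1
  rw [← intervalIntegral.integral_add_adjacent_intervals
    (hL.mono (uIcc_subset_Icc (left_mem_Icc.2 (ht₀.1.trans ht₀.2)) ht₀)).intervalIntegrable
    (hL.mono (uIcc_subset_Icc ht₀ (right_mem_Icc.2 (ht₀.1.trans ht₀.2)))).intervalIntegrable]
  gcongr
  refine sqrt_two_mul_sub_le_integral_of_strongForce ht₀.2
    ((hV.continuousOn.comp hx hxΩ).mono hIcc) (fun t ht ↦ hderiv t ⟨ht₀.1.trans_lt ht.1, ht.2⟩)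
    (fun t ht ↦ ?_) hSF (hL.mono hIcc).integrableOn_Icc
  exact (hV.differentiableOn one_ne_zero).differentiableAt
    (hΩ.mem_nhds (hxΩ (hIcc (Ioo_subset_Icc_self ht))))

end StrongForce

theorem strong_force_infinite_action_general (d : ℕ) (δ : ℝ) (hδ : 0 < δ)
    (U : EuclideanSpace ℝ (Fin d) → ℝ)
    (hUcont : ContinuousOn U {(0 : EuclideanSpace ℝ (Fin d))}ᶜ)
    (V : EuclideanSpace ℝ (Fin d) → ℝ)
    (hV : ContDiffOn ℝ 1 V {(0 : EuclideanSpace ℝ (Fin d))}ᶜ)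
    (hVinf : Filter.Tendsto V
      (nhdsWithin 0 {(0 : EuclideanSpace ℝ (Fin d))}ᶜ) Filter.atTop)
    (hSF : ∀ ξ : EuclideanSpace ℝ (Fin d), ξ ≠ 0 → ‖ξ‖ ≤ δ →
      ‖gradient V ξ‖ ^ 2 ≤ -U ξ)
    (a b : ℝ) (hab : a < b)
    (x x' : ℝ → EuclideanSpace ℝ (Fin d))
    (hx : ContinuousOn x (Set.Icc a b))
    (hx' : ContinuousOn x' (Set.Ico a b))
    (hderiv : ∀ t ∈ Set.Ico a b, HasDerivWithinAt x (x' t) (Set.Icc a b) t)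
    (hx0 : ∀ t ∈ Set.Ico a b, x t ≠ 0) (hxb : x b = 0) :
    ∀ M > (0 : ℝ), ∃ b' ∈ Set.Ioo a b,
      M ≤ ∫ t in a..b', ((1 / 2) * ‖x' t‖ ^ 2 - U (x t)) := by
  intro M _
  have hcoll := tendsto_nhdsLT_nhdsNE_of_continuousOn_Icc hab hx hx0 hxb
  have hsmall : ∀ᶠ t in 𝓝[<] b, ‖x t‖ ≤ δ :=
    (hcoll.mono_right nhdsWithin_le_nhds).eventually (Metric.closedBall_mem_nhds 0 hδ)
      |>.mono fun t ht ↦ mem_closedBall_zero_iff.1 ht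
  obtain ⟨t₀, hsmall₀, ht₀⟩ := (hsmall.forall_Ico_of_nhdsLT.and (Ioo_mem_nhdsLT hab)).exists
  set C := (∫ t in a..t₀, (1 / 2 * ‖x' t‖ ^ 2 - U (x t))) - √2 * V (x t₀)
  have hbound : ∀ b' ∈ Ioo t₀ b,
      √2 * V (x b') + C ≤ ∫ t in a..b', (1 / 2 * ‖x' t‖ ^ 2 - U (x t)) := by
    intro b' hb'
    have hIcc : Icc a b' ⊆ Ico a b := Icc_subset_Ico_right hb'.2
    have := integral_add_sqrt_two_mul_sub_le_integral_of_strongForce isOpen_compl_singleton hUcont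
      hV (hx.mono (hIcc.trans Ico_subset_Icc_self)) (hx'.mono hIcc)
      (fun t ht ↦ (hderiv t (hIcc (Ioo_subset_Icc_self ht))).hasDerivAt
        (Icc_mem_nhds ht.1 (ht.2.trans hb'.2)))
      (fun t ht ↦ hx0 t (hIcc ht)) ⟨ht₀.1.le, hb'.1.le⟩
      (fun t ht ↦ hSF _ (hx0 t ⟨ht₀.1.le.trans ht.1.le, ht.2.trans hb'.2⟩)
        (hsmall₀ t ⟨ht.1.le, ht.2.trans hb'.2⟩))
    linarith
  have haction : Tendsto (fun b' ↦ ∫ t in a..b', (1 / 2 * ‖x' t‖ ^ 2 - U (x t))) (𝓝[<] b) atTop :=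
    tendsto_atTop_mono' _ (mem_of_superset (Ioo_mem_nhdsLT ht₀.2) hbound) <|
      tendsto_atTop_add_const_right _ C ((hVinf.comp hcoll).const_mul_atTop (by positivity))
  obtain ⟨b', hM, hb'⟩ := ((haction.eventually_ge_atTop M).and (Ioo_mem_nhdsLT hab)).exists
  exact ⟨b', hb', hM⟩

/-- Strong Force condition implies infinite action along collision paths: if
`−U(ξ) ≥ |∇V(ξ)|²` near `0` with `V(ξ) → +∞` as `ξ → 0`, and `x` is a path reaching the
singularity `0` at time `b`, then the action `∫ₐᵇ' (|ẋ|²/2 − U(x))` exceeds any `M`. -/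
theorem strong_force_infinite_action (d : ℕ) (hd : 1 ≤ d) (δ : ℝ) (hδ : 0 < δ)
    (U : EuclideanSpace ℝ (Fin d) → ℝ)
    (hUcont : ContinuousOn U {(0 : EuclideanSpace ℝ (Fin d))}ᶜ)
    (hU0 : ∀ ξ : EuclideanSpace ℝ (Fin d), ξ ≠ 0 → U ξ ≤ 0)
    (V : EuclideanSpace ℝ (Fin d) → ℝ)
    (hV : ContDiffOn ℝ 1 V {(0 : EuclideanSpace ℝ (Fin d))}ᶜ)
    (hVinf : Filter.Tendsto V
      (nhdsWithin 0 {(0 : EuclideanSpace ℝ (Fin d))}ᶜ) Filter.atTop)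
    (hSF : ∀ ξ : EuclideanSpace ℝ (Fin d), ξ ≠ 0 → ‖ξ‖ ≤ δ →
      ‖gradient V ξ‖ ^ 2 ≤ -U ξ)
    (a b : ℝ) (hab : a < b)
    (x x' : ℝ → EuclideanSpace ℝ (Fin d))
    (hx : ContinuousOn x (Set.Icc a b))
    (hx' : ContinuousOn x' (Set.Ico a b))
    (hderiv : ∀ t ∈ Set.Ico a b, HasDerivWithinAt x (x' t) (Set.Icc a b) t)
    (hx0 : ∀ t ∈ Set.Ico a b, x t ≠ 0) (hxb : x b = 0) :
    ∀ M > (0 : ℝ), ∃ b' ∈ Set.Ioo a b,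
      M ≤ ∫ t in a..b', ((1 / 2) * ‖x' t‖ ^ 2 - U (x t)) :=
  strong_force_infinite_action_general d δ hδ U hUcont V hV hVinf hSF a b hab x x' hx hx' hderiv hx0
    hxb
end
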